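/- arXiv:2112.05371 — 2 statements merged into one kernel-verified Lean document; each statement's English description precedes it below -/
import Mathlib

section
/- If T is a supercyclic bounded operator on a complex Banach space and α > 0, then the operator S = (α + ‖T‖)⁻¹ · T is supercyclic but satisfies ‖S‖ < 1, hence S is not convex-cyclic. -/
/-!
Rescaling an operator by a nonzero scalar multiplies each `Tⁿ f` by a nonzero scalar, so it
leaves the projective orbit, hence supercyclicity, unchanged. Dividing `T` by `α + ‖T‖`
produces a strict contraction, whose orbits, and so their convex hulls, stay in the ball of
radius `‖g‖`; a bounded set cannot be dense in a nontrivial normed space.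
-/

open Set

section ProjectiveOrbit

variable {𝕜 E : Type*} [Field 𝕜] [TopologicalSpace E] [AddCommGroup E] [Module 𝕜 E]
  [IsTopologicalAddGroup E] [ContinuousConstSMul 𝕜 E]

/-- `T` is supercyclic when some projective orbit is dense. -/
def projectiveOrbit (T : E →L[𝕜] E) (f : E) : Set E :=
  {x | ∃ (c : 𝕜) (n : ℕ), x = c • (T ^ n) f}

theorem projectiveOrbit_smul (T : E →L[𝕜] E) (f : E) {a : 𝕜} (ha : a ≠ 0) :
    projectiveOrbit (a • T) f = projectiveOrbit T f := by
  ext x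
  simp only [projectiveOrbit, mem_ofPred_eq, smul_pow, smul_apply, smul_smul]
  constructor
  · rintro ⟨c, n, rfl⟩
    exact ⟨c * a ^ n, n, rfl⟩
  · rintro ⟨c, n, rfl⟩
    refine ⟨c * (a ^ n)⁻¹, n, ?_⟩
    rw [inv_mul_cancel_right₀ (pow_ne_zero n ha)]

end ProjectiveOrbit

theorem norm_inv_smul_lt_one {𝕜 E : Type*} [RCLike 𝕜] [NormedAddCommGroup E] [NormedSpace 𝕜 E]
    {x : E} {r : ℝ} (hr : ‖x‖ < r) : ‖(r : 𝕜)⁻¹ • x‖ < 1 := by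
  have hr₀ : 0 < r := (norm_nonneg x).trans_lt hr
  rw [norm_smul, norm_inv, RCLike.norm_of_nonneg hr₀.le, inv_mul_lt_iff₀ hr₀, mul_one]
  exact hr

section Contraction

variable {𝕜 E : Type*} [NontriviallyNormedField 𝕜] [NormedAddCommGroup E] [NormedSpace 𝕜 E]

theorem norm_pow_apply_le_of_norm_le_one {S : E →L[𝕜] E} (hS : ‖S‖ ≤ 1) (g : E) (n : ℕ) :
    ‖(S ^ n) g‖ ≤ ‖g‖ := by
  induction n with
  | zero => simp
  | succ n ih =>
    rw [pow_succ', mul_apply_eq_comp]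
    exact ((S.le_opNorm _).trans (mul_le_of_le_one_left (norm_nonneg _) hS)).trans ih

theorem isBounded_range_pow_apply_of_norm_le_one {S : E →L[𝕜] E} (hS : ‖S‖ ≤ 1) (g : E) :
    Bornology.IsBounded (range fun n : ℕ => (S ^ n) g) :=
  isBounded_iff_forall_norm_le.2
    ⟨‖g‖, by rintro _ ⟨n, rfl⟩; exact norm_pow_apply_le_of_norm_le_one hS g n⟩

theorem not_dense_convexHull_range_pow_apply_of_norm_le_one [NormedSpace ℝ E] [Nontrivial E]
    {S : E →L[𝕜] E} (hS : ‖S‖ ≤ 1) (g : E) :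
    ¬ Dense (convexHull ℝ (range fun n : ℕ => (S ^ n) g)) := by
  intro hdense
  have hbdd := (isBounded_convexHull.2 (isBounded_range_pow_apply_of_norm_le_one hS g)).closure
  rw [hdense.closure_eq] at hbdd
  exact NormedSpace.unbounded_univ ℝ E hbdd

end Contraction

theorem stmt_12 {X : Type*} [NormedAddCommGroup X] [NormedSpace ℂ X] [Nontrivial X]
    (T : X →L[ℂ] X) (f : X)
    (hsc : Dense {x : X | ∃ (c : ℂ) (n : ℕ), x = c • (T ^ n) f})
    (α : ℝ) (hα : 0 < α)
    (S : X →L[ℂ] X) (hS : S = (((α + ‖T‖ : ℝ) : ℂ))⁻¹ • T) :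
    Dense {x : X | ∃ (c : ℂ) (n : ℕ), x = c • (S ^ n) f} ∧ ‖S‖ < 1 ∧
      ¬ ∃ g : X, Dense (convexHull ℝ (Set.range fun n : ℕ => (S ^ n) g)) := by
  have hT : ‖T‖ < α + ‖T‖ := lt_add_of_pos_left _ hα
  have hS₁ : ‖S‖ < 1 := hS ▸ norm_inv_smul_lt_one hT
  have hscale : ((α + ‖T‖ : ℝ) : ℂ)⁻¹ ≠ 0 :=
    inv_ne_zero (Complex.ofReal_ne_zero.2 ((norm_nonneg T).trans_lt hT).ne')
  refine ⟨?_, hS₁, fun ⟨g, hg⟩ => not_dense_convexHull_range_pow_apply_of_norm_le_one hS₁.le g hg⟩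
  change Dense (projectiveOrbit S f)
  rwa [hS, projectiveOrbit_smul T f hscale]
end

section
/- Let T be a bounded linear operator on a complex Hilbert space, λ an eigenvalue of the adjoint T*. If T is convex-cyclic then the conjugate λ̄ lies in ℂ \ (closed unit disk ∪ ℝ); i.e., |λ| > 1 and Im(λ) ≠ 0. -/
/-!
If `T† v = λ v` with `v ≠ 0`, the functional `⟪v, ·⟫` is continuous, real-linear and onto `ℂ`,
and sends the orbit `Tⁿ f` to the geometric sequence `λ̄ⁿ c` with `c = ⟪v, f⟫`. So the convex hull
of `{λ̄ⁿ c}` is dense in `ℂ` and cannot lie in a proper closed convex set. If `|λ| ≤ 1` the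
sequence stays in the disk of radius `|c|`; if `λ` is real it stays on the line `ℝ c`.
-/

open Set ContinuousLinearMap ComplexConjugate

theorem Dense.eq_univ_of_convexHull_subset {E : Type*} [AddCommGroup E] [Module ℝ E]
    [TopologicalSpace E] {s K : Set E} (hs : Dense (convexHull ℝ s)) (hK : Convex ℝ K)
    (hKc : IsClosed K) (hsK : s ⊆ K) : K = univ :=
  eq_univ_of_univ_subset <| hs.closure_eq ▸ hKc.closure_subset_iff.2 (convexHull_min hsK hK)

theorem Dense.convexHull_image {E F : Type*} [AddCommGroup E] [Module ℝ E] [TopologicalSpace E]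
    [AddCommGroup F] [Module ℝ F] [TopologicalSpace F] {s : Set E} (hs : Dense (convexHull ℝ s))
    (L : E →ₗ[ℝ] F) (hLc : Continuous L) (hL : DenseRange L) :
    Dense (convexHull ℝ (L '' s)) :=
  L.image_convexHull s ▸ hL.dense_image hLc hs

namespace Complex

variable {μ c : ℂ}

theorem one_lt_norm_of_dense_convexHull_geom
    (h : Dense (convexHull ℝ (range fun n : ℕ => μ ^ n * c))) : 1 < ‖μ‖ := by
  by_contra! hμ
  have hbound : (range fun n : ℕ => μ ^ n * c) ⊆ Metric.closedBall 0 ‖c‖ := by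
    rintro _ ⟨n, rfl⟩
    simpa [norm_mul] using mul_le_of_le_one_left (norm_nonneg c) (pow_le_one₀ (norm_nonneg μ) hμ)
  have hball := h.eq_univ_of_convexHull_subset (convex_closedBall 0 ‖c‖) Metric.isClosed_closedBall
    hbound
  exact NormedSpace.unbounded_univ ℝ ℂ (hball ▸ Metric.isBounded_closedBall)

theorem im_ne_zero_of_dense_convexHull_geom
    (h : Dense (convexHull ℝ (range fun n : ℕ => μ ^ n * c))) : μ.im ≠ 0 := by
  intro hμ
  have hspan : (range fun n : ℕ => μ ^ n * c) ⊆ Submodule.span ℝ {c} := by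
    rintro _ ⟨n, rfl⟩
    refine Submodule.mem_span_singleton.2 ⟨μ.re ^ n, ?_⟩
    rw [← re_add_im μ, hμ]
    simp
  have htop : Submodule.span ℝ {c} = ⊤ := Submodule.coe_eq_univ.1 <|
    h.eq_univ_of_convexHull_subset (Submodule.span ℝ {c}).convex
      (Submodule.closed_of_finiteDimensional _) hspan
  have := finrank_span_le_card (R := ℝ) ({c} : Set ℂ)
  rw [htop, finrank_top, finrank_real_complex] at this
  simp at this

end Complex

theorem inner_pow_apply_of_adjoint_eigenvector {H : Type*} [NormedAddCommGroup H]
    [InnerProductSpace ℂ H] [CompleteSpace H] {T : H →L[ℂ] H} {lam : ℂ} {v : H}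
    (hv : adjoint T v = lam • v) (f : H) (n : ℕ) :
    inner ℂ v ((T ^ n) f) = conj lam ^ n * inner ℂ v f := by
  have hpow : (adjoint T ^ n) v = lam ^ n • v := by
    induction n with
    | zero => simp
    | succ n ih => rw [pow_succ', mul_apply_eq_comp, ih, map_smul, hv, smul_smul, pow_succ]
  rw [← adjoint_inner_left, ← star_eq_adjoint, star_pow, star_eq_adjoint, hpow, inner_smul_left,
    map_pow]

theorem stmt_13 {H : Type*} [NormedAddCommGroup H] [InnerProductSpace ℂ H] [CompleteSpace H]
    (T : H →L[ℂ] H) (lam : ℂ)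
    (heig : ∃ v : H, v ≠ 0 ∧ (ContinuousLinearMap.adjoint T) v = lam • v)
    (hcc : ∃ f : H, Dense (convexHull ℝ (Set.range fun n : ℕ => (T ^ n) f))) :
    1 < ‖starRingEnd ℂ lam‖ ∧ (starRingEnd ℂ lam).im ≠ 0 := by
  obtain ⟨v, hv0, hv⟩ := heig
  obtain ⟨f, hf⟩ := hcc
  let Φ : H →ₗ[ℂ] ℂ := innerSL ℂ v
  have hΦ : Function.Surjective Φ := LinearMap.surjective fun h0 ↦
    hv0 (by simpa [Φ] using LinearMap.congr_fun h0 v)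
  have hdense := hf.convexHull_image (Φ.restrictScalars ℝ) (innerSL ℂ v).continuous
    hΦ.denseRange
  have hgeom : (Φ.restrictScalars ℝ ∘ fun n : ℕ => (T ^ n) f) =
      fun n ↦ conj lam ^ n * inner ℂ v f :=
    funext (inner_pow_apply_of_adjoint_eigenvector hv f)
  rw [← range_comp, hgeom] at hdense
  exact ⟨Complex.one_lt_norm_of_dense_convexHull_geom hdense,
    Complex.im_ne_zero_of_dense_convexHull_geom hdense⟩
end
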